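/- arXiv:2102.11494 — 4 statements merged into one kernel-verified Lean document; each statement's English description precedes it below -/
import Mathlib

section
/- For any 0 ≤ ε₁ < ε₂ < 1, there exists a two-player game with |A| = |B| = 2 and rewards μ₁, μ₂ : A × B → [0,1] such that max_{a∈A} φ_{ε₁}(a) − max_{a∈A} φ_{ε₂}(a) ≥ 1/2 and max_{a∈A} φ_{ε₁}(a) − φ_{ε₁}(argmax_{a'} φ_{ε₂}(a')) ≥ 1/2. -/
open Finset

/-- The ε-approximate best-response set of the follower to leader action `a`. -/
noncomputable def BRset {A B : Type*} [Fintype B] [Nonempty B]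
    (μ₂ : A → B → ℝ) (ε : ℝ) (a : A) : Set B :=
  {b | μ₂ a b ≥ (⨆ b', μ₂ a b') - ε}

/-- The leader's pessimistic value over ε-approximate best responses. -/
noncomputable def phiVal {A B : Type*} [Fintype B] [Nonempty B]
    (μ₁ μ₂ : A → B → ℝ) (ε : ℝ) (a : A) : ℝ :=
  sInf (μ₁ a '' BRset μ₂ ε a)

lemma sup2 (f : Fin 2 → ℝ) : (⨆ b, f b) = max (f 0) (f 1) := by
  apply le_antisymm
  · apply ciSup_le; intro b; fin_cases b
    · exact le_max_left _ _
    · exact le_max_right _ _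
  · apply max_le <;> exact le_ciSup (Set.finite_range f).bddAbove _

lemma range2 (f : Fin 2 → ℝ) : Set.range f = {f 0, f 1} := by
  ext x; constructor
  · rintro ⟨b, rfl⟩; fin_cases b
    · exact Or.inl rfl
    · exact Or.inr rfl
  · rintro (rfl | rfl)
    · exact ⟨0, rfl⟩
    · exact ⟨1, rfl⟩

lemma BR_mem {μ₂ : Fin 2 → Fin 2 → ℝ} {ε : ℝ} {a b : Fin 2} :
    b ∈ BRset μ₂ ε a ↔ μ₂ a b ≥ max (μ₂ a 0) (μ₂ a 1) - ε := by
  simp [BRset, sup2]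

theorem gap_can_be_large (ε₁ ε₂ : ℝ) (h0 : 0 ≤ ε₁) (h12 : ε₁ < ε₂) (h2 : ε₂ < 1) :
    ∃ μ₁ μ₂ : Fin 2 → Fin 2 → ℝ,
      (∀ a b, μ₁ a b ∈ Set.Icc (0:ℝ) 1) ∧ (∀ a b, μ₂ a b ∈ Set.Icc (0:ℝ) 1) ∧
      (⨆ a, phiVal μ₁ μ₂ ε₁ a) - (⨆ a, phiVal μ₁ μ₂ ε₂ a) ≥ 1/2 ∧
      ∀ a' : Fin 2, (∀ a, phiVal μ₁ μ₂ ε₂ a ≤ phiVal μ₁ μ₂ ε₂ a') →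
        (⨆ a, phiVal μ₁ μ₂ ε₁ a) - phiVal μ₁ μ₂ ε₁ a' ≥ 1/2 := by
  have hε₂0 : 0 ≤ ε₂ := le_of_lt (lt_of_le_of_lt h0 h12)
  set c : ℝ := (ε₁ + ε₂) / 2 with hc
  have hc0 : 0 ≤ c := by positivity
  have hc1 : c ≤ 1 := by
    rw [hc]; nlinarith
  refine ⟨![![1, 0], ![1/2, 1/2]], ![![c, 0], ![1, 1]], ?_, ?_, ?_, ?_⟩
  · intro a b; fin_cases a <;> fin_cases b <;> simp <;> norm_num
  · intro a b; fin_cases a <;> fin_cases b <;> simp [hc0, hc1]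
  all_goals
  · set μ₁ : Fin 2 → Fin 2 → ℝ := ![![1, 0], ![1/2, 1/2]] with hμ₁
    set μ₂ : Fin 2 → Fin 2 → ℝ := ![![c, 0], ![1, 1]] with hμ₂
    have hBR1 : BRset μ₂ ε₁ 0 = {0} := by
      ext b
      rw [BR_mem]
      have hmax : max (μ₂ 0 0) (μ₂ 0 1) = c := by
        simp [hμ₂]; exact hc0
      rw [hmax]
      fin_cases b
      · simp [hμ₂]; linarith
      · simp [hμ₂]
        rw [hc]; linarith
    have hBRuniv : ∀ ε : ℝ, 0 ≤ ε → BRset μ₂ ε 1 = Set.univ := by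
      intro ε hε
      ext b
      rw [BR_mem]
      fin_cases b <;> simp [hμ₂] <;> linarith
    have hBR2 : BRset μ₂ ε₂ 0 = Set.univ := by
      ext b
      rw [BR_mem]
      have hmax : max (μ₂ 0 0) (μ₂ 0 1) = c := by
        simp [hμ₂]; exact hc0
      rw [hmax]
      fin_cases b <;> simp [hμ₂, hc] <;> linarith
    have hφ10 : phiVal μ₁ μ₂ ε₁ 0 = 1 := by
      rw [phiVal, hBR1]
      simp [hμ₁]
    have hφ20 : phiVal μ₁ μ₂ ε₂ 0 = 0 := by
      rw [phiVal, hBR2, Set.image_univ, range2]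
      have : μ₁ 0 0 = 1 := by simp [hμ₁]
      have h1 : μ₁ 0 1 = 0 := by simp [hμ₁]
      rw [this, h1, csInf_pair]
      norm_num
    have hφa1 : ∀ ε : ℝ, 0 ≤ ε → phiVal μ₁ μ₂ ε 1 = 1/2 := by
      intro ε hε
      rw [phiVal, hBRuniv ε hε, Set.image_univ, range2]
      have h0' : μ₁ 1 0 = 1/2 := by simp [hμ₁]
      have h1' : μ₁ 1 1 = 1/2 := by simp [hμ₁]
      rw [h0', h1', csInf_pair]
      norm_num
    have hsup1 : (⨆ a, phiVal μ₁ μ₂ ε₁ a) = 1 := by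
      rw [sup2, hφ10, hφa1 ε₁ h0]; norm_num
    have hsup2 : (⨆ a, phiVal μ₁ μ₂ ε₂ a) = 1/2 := by
      rw [sup2, hφ20, hφa1 ε₂ hε₂0]; norm_num
    first
    | (rw [hsup1, hsup2]; norm_num)
    | (intro a' ha'
       have ha1 : a' = 1 := by
         by_contra h
         have : a' = 0 := by omega
         subst this
         have := ha' 1
         rw [hφ20, hφa1 ε₂ hε₂0] at this
         linarith
       subst ha1
       rw [hsup1, hφa1 ε₁ h0]
       norm_num)
end

section
/- Suppose |μ̂ᵢ(a,b) − μᵢ(a,b)| ≤ ε/8 for all (a,b) ∈ A × B and i ∈ {1,2}. Let B̂R_{3ε/4}(a) = {b : μ̂₂(a,b) ≥ max_{b'} μ̂₂(a,b') − 3ε/4}, φ̂(a) = min_{b ∈ B̂R_{3ε/4}(a)} μ̂₁(a,b), and let â ∈ argmax_{a∈A} φ̂(a). Then φ_{ε/2}(â) ≥ max_{a∈A} φ_ε(a) − ε, where φ_δ(a) = min_{b ∈ BR_δ(a)} μ₁(a,b) and BR_δ(a) = {b : μ₂(a,b) ≥ max_{b'} μ₂(a,b') − δ}. -/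
open Finset

section Aux
variable {A B : Type*} [Fintype B] [Nonempty B]

lemma le_sup_aux (μ₂ : A → B → ℝ) (a : A) (b : B) : μ₂ a b ≤ ⨆ b', μ₂ a b' :=
  le_ciSup (Set.Finite.bddAbove (Set.finite_range _)) b

lemma brset_nonempty (μ₂ : A → B → ℝ) {ε : ℝ} (hε : 0 ≤ ε) (a : A) :
    (BRset μ₂ ε a).Nonempty := by
  obtain ⟨b, hb⟩ := Finite.exists_max (μ₂ a)
  have h : (⨆ b', μ₂ a b') ≤ μ₂ a b := ciSup_le hb
  exact ⟨b, by simp only [BRset, Set.mem_setOf_eq]; linarith⟩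

lemma sup_close (μ μ' : A → B → ℝ) (a : A) {δ : ℝ}
    (h : ∀ b, |μ' a b - μ a b| ≤ δ) :
    (⨆ b', μ' a b') ≤ (⨆ b', μ a b') + δ := by
  refine ciSup_le fun b => ?_
  have := (abs_le.mp (h b)).2
  have := le_sup_aux μ a b
  linarith

lemma inf_close (μ μ' : A → B → ℝ) (a : A) (S : Set B) (hS : S.Nonempty) {δ : ℝ}
    (h : ∀ b, |μ' a b - μ a b| ≤ δ) :
    sInf (μ a '' S) ≥ sInf (μ' a '' S) - δ := by
  refine le_csInf (hS.image _) ?_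
  rintro x ⟨b, hb, rfl⟩
  have h1 : sInf (μ' a '' S) ≤ μ' a b :=
    csInf_le (Set.Finite.bddBelow (S.toFinite.image _)) ⟨b, hb, rfl⟩
  have := (abs_le.mp (h b)).2
  linarith

lemma inf_subset (μ : A → B → ℝ) (a : A) {S T : Set B} (hS : S.Nonempty) (hST : S ⊆ T) :
    sInf (μ a '' T) ≤ sInf (μ a '' S) :=
  csInf_le_csInf (Set.Finite.bddBelow (T.toFinite.image _)) (hS.image _)
    (Set.image_mono hST)

end Aux

theorem stackelberg_value_guarantee {A B : Type*} [Fintype A] [Fintype B] [Nonempty A] [Nonempty B]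
    (μ₁ μ₂ μh₁ μh₂ : A → B → ℝ) (ε : ℝ) (hε : 0 < ε)
    (h1 : ∀ a b, |μh₁ a b - μ₁ a b| ≤ ε/8) (h2 : ∀ a b, |μh₂ a b - μ₂ a b| ≤ ε/8)
    (ahat : A) (hahat : ∀ a, phiVal μh₁ μh₂ (3*ε/4) a ≤ phiVal μh₁ μh₂ (3*ε/4) ahat) :
    phiVal μ₁ μ₂ (ε/2) ahat ≥ (⨆ a, phiVal μ₁ μ₂ ε a) - ε := by
  -- subset 1 : BR_{ε/2}(a) ⊆ BRhat_{3ε/4}(a)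
  have hsub1 : ∀ a, BRset μ₂ (ε/2) a ⊆ BRset μh₂ (3*ε/4) a := by
    intro a b hb
    simp only [BRset, Set.mem_setOf_eq] at hb ⊢
    have hs : (⨆ b', μh₂ a b') ≤ (⨆ b', μ₂ a b') + ε/8 := sup_close μ₂ μh₂ a (h2 a)
    have := (abs_le.mp (h2 a b)).1
    linarith
  -- subset 2 : BRhat_{3ε/4}(a) ⊆ BR_ε(a)
  have hsub2 : ∀ a, BRset μh₂ (3*ε/4) a ⊆ BRset μ₂ ε a := by
    intro a b hb
    simp only [BRset, Set.mem_setOf_eq] at hb ⊢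
    have hs : (⨆ b', μ₂ a b') ≤ (⨆ b', μh₂ a b') + ε/8 := by
      refine sup_close μh₂ μ₂ a fun b => ?_
      rw [abs_sub_comm]; exact h2 a b
    have := (abs_le.mp (h2 a b)).2
    linarith
  have hne1 : ∀ a, (BRset μ₂ (ε/2) a).Nonempty := brset_nonempty μ₂ (by linarith)
  have hneh : ∀ a, (BRset μh₂ (3*ε/4) a).Nonempty := brset_nonempty μh₂ (by linarith)
  -- key1 : φ_{ε/2}(ahat) ≥ φ̂(ahat) - ε/8
  have key1 : phiVal μ₁ μ₂ (ε/2) ahat ≥ phiVal μh₁ μh₂ (3*ε/4) ahat - ε/8 := by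
    have ha : sInf (μ₁ ahat '' BRset μh₂ (3*ε/4) ahat) ≤ sInf (μ₁ ahat '' BRset μ₂ (ε/2) ahat) :=
      inf_subset μ₁ ahat (hne1 ahat) (hsub1 ahat)
    have hb : sInf (μ₁ ahat '' BRset μh₂ (3*ε/4) ahat)
        ≥ sInf (μh₁ ahat '' BRset μh₂ (3*ε/4) ahat) - ε/8 :=
      inf_close μ₁ μh₁ ahat _ (hneh ahat) (h1 ahat)
    unfold phiVal
    linarith
  -- key2 : φ̂(a) ≥ φ_ε(a) - ε/8
  have key2 : ∀ a, phiVal μh₁ μh₂ (3*ε/4) a ≥ phiVal μ₁ μ₂ ε a - ε/8 := by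
    intro a
    have ha : sInf (μ₁ a '' BRset μ₂ ε a) ≤ sInf (μ₁ a '' BRset μh₂ (3*ε/4) a) :=
      inf_subset μ₁ a (hneh a) (hsub2 a)
    have hb : sInf (μh₁ a '' BRset μh₂ (3*ε/4) a)
        ≥ sInf (μ₁ a '' BRset μh₂ (3*ε/4) a) - ε/8 := by
      refine inf_close μh₁ μ₁ a _ (hneh a) fun b => ?_
      rw [abs_sub_comm]; exact h1 a b
    unfold phiVal
    linarith
  have hsup : (⨆ a, phiVal μ₁ μ₂ ε a) ≤ phiVal μ₁ μ₂ (ε/2) ahat + ε := by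
    refine ciSup_le fun a => ?_
    have := hahat a
    have := key2 a
    linarith
  linarith
end

section
/- Let K ⊆ A × B be a finite set with weights ρ : K → [0,1] summing to 1, and suppose the core-set condition max_{(a,b)∈A×B} φ(a,b)ᵀ (Σ_{(a',b')∈K} ρ(a',b')φ(a',b')φ(a',b')ᵀ)⁻¹ φ(a,b) ≤ 2d holds (with the matrix invertible). If θ̂ = θ* + (Σ_j ρ_j φ_j φ_jᵀ)⁻¹ Σ_j ρ_j φ_j z_j where |z_j| ≤ η for all j ∈ K, then max_{(a,b)∈A×B} |φ(a,b)ᵀ(θ̂ − θ*)| ≤ √(2d) · η. -/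
/-! With `w = φ(p)ᵀ M⁻¹`, the error `φ(p)ᵀ(θ̂ - θ*)` is the `ρ`-average of `z_j · wᵀφ_j`, so it is
at most `η` times the `ρ`-average of `|wᵀφ_j|`. By Jensen this average is at most
`(Σ_j ρ_j (wᵀφ_j)²)^{1/2} = (wᵀ M w)^{1/2} = (φ(p)ᵀ M⁻¹ φ(p))^{1/2}`, which the core-set condition
bounds by `√(2d)`. -/

open Matrix

theorem Finset.sum_mul_abs_le_sqrt_sum_mul_sq {ι : Type*} (s : Finset ι) {ρ : ι → ℝ}
    (x : ι → ℝ) (hρ0 : ∀ j ∈ s, 0 ≤ ρ j) (hρ1 : ∑ j ∈ s, ρ j = 1) :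
    ∑ j ∈ s, ρ j * |x j| ≤ √(∑ j ∈ s, ρ j * x j ^ 2) := by
  refine Real.le_sqrt_of_sq_le ?_
  have := s.sum_sq_le_sum_mul_sum_of_sq_le_mul (r := fun j => ρ j * |x j|) hρ0
    (fun j hj => mul_nonneg (hρ0 j hj) (sq_nonneg (x j)))
    (fun j _ => (by rw [mul_pow, sq_abs]; ring : _ = _).le)
  rwa [hρ1, one_mul] at this

namespace Matrix

variable {ι n : Type*} [Fintype n]

theorem dotProduct_sum_smul_vecMulVec_self_mulVec {R : Type*} [CommRing R] (s : Finset ι)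
    (ρ : ι → R) (v : ι → n → R) (w : n → R) :
    w ⬝ᵥ ((∑ j ∈ s, ρ j • vecMulVec (v j) (v j)) *ᵥ w) = ∑ j ∈ s, ρ j * (w ⬝ᵥ v j) ^ 2 := by
  rw [sum_mulVec, dotProduct_sum]
  refine Finset.sum_congr rfl fun j _ => ?_
  rw [smul_mulVec, vecMulVec_mulVec, op_smul_eq_smul, dotProduct_smul, dotProduct_smul,
    smul_eq_mul, smul_eq_mul, dotProduct_comm (v j) w]
  ring

theorem sum_mul_abs_dotProduct_inv_mulVec_le_sqrt [DecidableEq n] (s : Finset ι) {ρ : ι → ℝ}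
    (v : ι → n → ℝ) (hρ0 : ∀ j ∈ s, 0 ≤ ρ j) (hρ1 : ∑ j ∈ s, ρ j = 1) {M : Matrix n n ℝ}
    (hM : M = ∑ j ∈ s, ρ j • vecMulVec (v j) (v j)) (hMunit : IsUnit M) (u : n → ℝ) :
    ∑ j ∈ s, ρ j * |u ⬝ᵥ (M⁻¹ *ᵥ v j)| ≤ √(u ⬝ᵥ (M⁻¹ *ᵥ u)) := by
  set w := u ᵥ* M⁻¹
  have hquad : ∑ j ∈ s, ρ j * (w ⬝ᵥ v j) ^ 2 = u ⬝ᵥ (M⁻¹ *ᵥ u) := by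
    rw [← dotProduct_sum_smul_vecMulVec_self_mulVec, ← hM, dotProduct_mulVec, vecMul_vecMul,
      nonsing_inv_mul M ((isUnit_iff_isUnit_det M).mp hMunit), vecMul_one, dotProduct_comm,
      dotProduct_mulVec]
  have hlinear : ∀ j, u ⬝ᵥ (M⁻¹ *ᵥ v j) = w ⬝ᵥ v j := fun j => dotProduct_mulVec u M⁻¹ (v j)
  simp only [hlinear, ← hquad]
  exact s.sum_mul_abs_le_sqrt_sum_mul_sq _ hρ0 hρ1

end Matrix

theorem coreset_least_squares_error {A B : Type*} [Fintype A] [Fintype B] (d : ℕ)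
    (φ : A × B → Fin d → ℝ) (K : Finset (A × B)) (ρ z : A × B → ℝ)
    (θstar θhat : Fin d → ℝ) (η : ℝ) (hη : 0 ≤ η)
    (hρ0 : ∀ j ∈ K, 0 ≤ ρ j) (hρ1 : ∑ j ∈ K, ρ j = 1)
    (M : Matrix (Fin d) (Fin d) ℝ)
    (hM : M = ∑ j ∈ K, ρ j • Matrix.vecMulVec (φ j) (φ j))
    (hMunit : IsUnit M)
    (hcore : ∀ p : A × B, φ p ⬝ᵥ (M⁻¹ *ᵥ φ p) ≤ 2 * d)
    (hz : ∀ j ∈ K, |z j| ≤ η)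
    (hθ : θhat = θstar + M⁻¹ *ᵥ (∑ j ∈ K, (ρ j * z j) • φ j)) :
    ∀ p : A × B, |φ p ⬝ᵥ (θhat - θstar)| ≤ Real.sqrt (2 * d) * η := by
  intro p
  have herror : φ p ⬝ᵥ (θhat - θstar) = ∑ j ∈ K, ρ j * z j * (φ p ⬝ᵥ (M⁻¹ *ᵥ φ j)) := by
    simp only [hθ, add_sub_cancel_left, mulVec_sum, dotProduct_sum, mulVec_smul, dotProduct_smul,
      smul_eq_mul]
  calc |φ p ⬝ᵥ (θhat - θstar)|
      ≤ ∑ j ∈ K, ρ j * |φ p ⬝ᵥ (M⁻¹ *ᵥ φ j)| * η := by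
        rw [herror]
        refine (Finset.abs_sum_le_sum_abs _ _).trans (Finset.sum_le_sum fun j hj => ?_)
        rw [abs_mul, abs_mul, abs_of_nonneg (hρ0 j hj), mul_right_comm]
        exact mul_le_mul_of_nonneg_left (hz j hj) (mul_nonneg (hρ0 j hj) (abs_nonneg _))
    _ = (∑ j ∈ K, ρ j * |φ p ⬝ᵥ (M⁻¹ *ᵥ φ j)|) * η := (Finset.sum_mul ..).symm
    _ ≤ √(φ p ⬝ᵥ (M⁻¹ *ᵥ φ p)) * η := by
        gcongr
        exact sum_mul_abs_dotProduct_inv_mulVec_le_sqrt K φ hρ0 hρ1 hM hMunit (φ p)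
    _ ≤ √(2 * d) * η := by gcongr; exact hcore p
end

section
/- Suppose |μ̂ᵢ(a,b) − μᵢ(a,b)| ≤ ε/8 for all (a,b) ∈ A × B and i ∈ {1,2}. With optimistic tie-breaking, define ψ̂(a) = max_{b ∈ B̂R_{3ε/4}(a)} μ̂₁(a,b) where B̂R_{3ε/4}(a) = {b : μ̂₂(a,b) ≥ max_{b'} μ̂₂(a,b') − 3ε/4}, and let â ∈ argmax_a ψ̂(a). Then ψ_ε(â) ≥ max_{a∈A} ψ_{ε/2}(a) − ε ≥ max_{a∈A} ψ₀(a) − ε, where ψ_δ(a) = max_{b ∈ BR_δ(a)} μ₁(a,b) and BR_δ(a) = {b : μ₂(a,b) ≥ max_{b'} μ₂(a,b') − δ}. -/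
open Finset

/-- The leader's optimistic value over ε-approximate best responses. -/
noncomputable def psiVal {A B : Type*} [Fintype B] [Nonempty B]
    (μ₁ μ₂ : A → B → ℝ) (ε : ℝ) (a : A) : ℝ :=
  sSup (μ₁ a '' BRset μ₂ ε a)

section Aux
variable {A B : Type*} [Fintype B] [Nonempty B]

lemma aux_sSup_le (f g : B → ℝ) {S₁ S₂ : Set B} (hsub : S₁ ⊆ S₂) (hne : S₁.Nonempty)
    (c : ℝ) (hfg : ∀ b, f b ≤ g b + c) :
    sSup (f '' S₁) ≤ sSup (g '' S₂) + c := by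
  apply csSup_le (hne.image f)
  rintro x ⟨b, hb, rfl⟩
  have : g b ≤ sSup (g '' S₂) :=
    le_csSup ((Set.toFinite S₂).image g).bddAbove ⟨b, hsub hb, rfl⟩
  linarith [hfg b]

lemma iSup_le_iSup_add (f g : B → ℝ) (c : ℝ) (h : ∀ b, f b ≤ g b + c) :
    (⨆ b, f b) ≤ (⨆ b, g b) + c :=
  ciSup_le fun b => le_trans (h b) (add_le_add_left (le_ciSup (Set.finite_range g).bddAbove b) c)

end Aux

theorem optimistic_stackelberg_guarantee {A B : Type*} [Fintype A] [Fintype B] [Nonempty A] [Nonempty B]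
    (μ₁ μ₂ μh₁ μh₂ : A → B → ℝ) (ε : ℝ) (hε : 0 < ε)
    (h1 : ∀ a b, |μh₁ a b - μ₁ a b| ≤ ε/8) (h2 : ∀ a b, |μh₂ a b - μ₂ a b| ≤ ε/8)
    (ahat : A) (hahat : ∀ a, psiVal μh₁ μh₂ (3*ε/4) a ≤ psiVal μh₁ μh₂ (3*ε/4) ahat) :
    psiVal μ₁ μ₂ ε ahat ≥ (⨆ a, psiVal μ₁ μ₂ (ε/2) a) - ε ∧
    (⨆ a, psiVal μ₁ μ₂ (ε/2) a) - ε ≥ (⨆ a, psiVal μ₁ μ₂ 0 a) - ε := by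
  have h2' : ∀ a b, μh₂ a b - ε/8 ≤ μ₂ a b ∧ μ₂ a b - ε/8 ≤ μh₂ a b := by
    intro a b; have := abs_le.mp (h2 a b); constructor <;> linarith [this.1, this.2]
  have h1' : ∀ a b, μh₁ a b - ε/8 ≤ μ₁ a b ∧ μ₁ a b - ε/8 ≤ μh₁ a b := by
    intro a b; have := abs_le.mp (h1 a b); constructor <;> linarith [this.1, this.2]
  -- supremum comparisons for μ₂ vs μh₂
  have hS : ∀ a : A, (⨆ b', μh₂ a b') ≤ (⨆ b', μ₂ a b') + ε/8 :=
    fun a => iSup_le_iSup_add _ _ _ (fun b => by linarith [(h2' a b).1])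
  have hS' : ∀ a : A, (⨆ b', μ₂ a b') ≤ (⨆ b', μh₂ a b') + ε/8 :=
    fun a => iSup_le_iSup_add _ _ _ (fun b => by linarith [(h2' a b).2])
  -- BR set inclusions
  have hBR1 : ∀ a : A, BRset μ₂ (ε/2) a ⊆ BRset μh₂ (3*ε/4) a := by
    intro a b hb
    simp only [BRset, Set.mem_setOf_eq, ge_iff_le] at hb ⊢
    have := (h2' a b).2
    linarith [hS a]
  have hBR2 : ∀ a : A, BRset μh₂ (3*ε/4) a ⊆ BRset μ₂ ε a := by
    intro a b hb
    simp only [BRset, Set.mem_setOf_eq, ge_iff_le] at hb ⊢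
    have := (h2' a b).1
    linarith [hS' a]
  have hne : ∀ a : A, (BRset μ₂ (ε/2) a).Nonempty :=
    fun a => brset_nonempty μ₂ (by linarith) a
  have hneh : ∀ a : A, (BRset μh₂ (3*ε/4) a).Nonempty :=
    fun a => brset_nonempty μh₂ (by linarith) a
  -- psi comparisons
  have key1 : ∀ a : A, psiVal μ₁ μ₂ (ε/2) a ≤ psiVal μh₁ μh₂ (3*ε/4) a + ε/8 := by
    intro a
    exact aux_sSup_le _ _ (hBR1 a) (hne a) (ε/8) (fun b => by linarith [(h1' a b).2])
  have key2 : psiVal μh₁ μh₂ (3*ε/4) ahat ≤ psiVal μ₁ μ₂ ε ahat + ε/8 :=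
    aux_sSup_le _ _ (hBR2 ahat) (hneh ahat) (ε/8) (fun b => by linarith [(h1' ahat b).1])
  constructor
  · have : (⨆ a, psiVal μ₁ μ₂ (ε/2) a) ≤ psiVal μ₁ μ₂ ε ahat + ε/4 := by
      apply ciSup_le
      intro a
      linarith [key1 a, hahat a, key2]
    linarith
  · have hmono : ∀ a : A, psiVal μ₁ μ₂ 0 a ≤ psiVal μ₁ μ₂ (ε/2) a := by
      intro a
      apply csSup_le_csSup ((Set.toFinite _).image _).bddAbove
        ((brset_nonempty μ₂ le_rfl a).image _)
      apply Set.image_mono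
      intro b hb
      simp only [BRset, Set.mem_setOf_eq, ge_iff_le] at hb ⊢
      linarith
    have : (⨆ a, psiVal μ₁ μ₂ 0 a) ≤ (⨆ a, psiVal μ₁ μ₂ (ε/2) a) := by
      apply ciSup_le
      intro a
      exact le_trans (hmono a) (le_ciSup (Set.finite_range _).bddAbove a)
    linarith
end
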